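/- arXiv:2405.04672 — 6 statements merged into one kernel-verified Lean document; each statement's English description precedes it below -/
import Mathlib

section
/- Let ρ be a PSD n×n complex matrix and let N₁, …, N_m (m ≥ 1) be pairwise commuting PSD n×n complex matrices. Then tr(ρ·N₁N₂⋯N_m) is a nonnegative real number and tr(ρ·N₁N₂⋯N_m) ≤ ∏_{k=1}^m ( tr(ρ·N_k^m) )^(1/m), where the m-th roots are real powers of the nonnegative real traces. -/
/-!
Pairwise commuting PSD matrices are simultaneously unitarily diagonalizable,
`N k = U diag(d k) Uᴴ` with `d k ≥ 0`. Writing `p i = (Uᴴ ρ U) i i ≥ 0`, every trace in the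
statement becomes a weighted sum: `tr(ρ N₁⋯N_m) = ∑ i, p i * ∏ k, d k i` and
`tr(ρ N_k^m) = ∑ i, p i * d k i ^ m`. The inequality is then the discrete Hölder inequality
for `m` functions, each with exponent `m`.
-/

open scoped Matrix ComplexOrder ENNReal
open Function Module Finset MeasureTheory Matrix Unitary

theorem LinearMap.IsSymmetric.exists_orthonormalBasis_apply_eq_smul_of_pairwise_commute
    {𝕜 E ι κ : Type*} [RCLike 𝕜] [NormedAddCommGroup E] [InnerProductSpace 𝕜 E]
    [FiniteDimensional 𝕜 E] [Fintype κ] (hκ : finrank 𝕜 E = Fintype.card κ)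
    {T : ι → Module.End 𝕜 E} (hT : ∀ i, (T i).IsSymmetric) (hC : Pairwise (Commute on T)) :
    ∃ (b : OrthonormalBasis κ 𝕜 E) (χ : κ → ι → ℝ),
      ∀ a i, T i (b a) = (χ a i : 𝕜) • b a := by
  classical
  let V (γ : ι → 𝕜) := ⨅ i, End.eigenspace (T i) (γ i)
  have hV := directSum_isInternal_of_pairwise_commute hT hC
  have : Fintype {γ // V γ ≠ ⊥} := hV.submodule_iSupIndep.fintypeNeBotOfFiniteDimensional
  have hV' := DirectSum.isInternal_ne_bot_iff.mpr hV
  have hO := (orthogonalFamily_iInf_eigenspaces hT).comp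
    (Subtype.val_injective (p := (V · ≠ ⊥)))
  let e := Fintype.equivFin κ
  let b := (hV'.subordinateOrthonormalBasis hκ hO).reindex e.symm
  let γ a := (hV'.subordinateOrthonormalBasisIndex hκ (e a) hO).val
  have hb a i : T i (b a) = γ a i • b a := by
    refine End.mem_eigenspace_iff.mp <|
      (Submodule.mem_iInf (fun i => End.eigenspace (T i) (γ a i))).mp ?_ i
    simpa [b] using hV'.subordinateOrthonormalBasis_subordinate hκ (e a) hO
  refine ⟨b, fun a i => RCLike.re (γ a i), fun a i => ?_⟩
  have hreal : starRingEnd 𝕜 (γ a i) = γ a i := (hT i).conj_eigenvalue_eq_self <|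
    End.hasEigenvalue_of_hasEigenvector
      ⟨End.mem_eigenspace_iff.mpr (hb a i), b.orthonormal.ne_zero a⟩
  rw [hb, RCLike.conj_eq_iff_re.mp hreal]

theorem Matrix.IsHermitian.exists_unitary_eq_conjStarAlgAut_diagonal_of_pairwise_commute
    {𝕜 ι n : Type*} [RCLike 𝕜] [Fintype n] [DecidableEq n] {A : ι → Matrix n n 𝕜}
    (hA : ∀ i, (A i).IsHermitian) (hC : Pairwise (Commute on A)) :
    ∃ (U : unitaryGroup n 𝕜) (d : ι → n → ℝ),
      ∀ i, A i = conjStarAlgAut 𝕜 _ U (diagonal (RCLike.ofReal ∘ d i)) := by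
  let T i : Module.End 𝕜 (EuclideanSpace 𝕜 n) := toEuclideanLin (A i)
  have hT i : (T i).IsSymmetric := isSymmetric_toEuclideanLin_iff.mpr (hA i)
  have hTC : Pairwise (Commute on T) := fun i j hij => (hC hij).map (toLpLinAlgEquiv 2)
  obtain ⟨b, χ, hb⟩ :=
    LinearMap.IsSymmetric.exists_orthonormalBasis_apply_eq_smul_of_pairwise_commute
      (E := EuclideanSpace 𝕜 n) (κ := n) finrank_euclideanSpace hT hTC
  have hbv a i : A i *ᵥ b a = (χ a i : 𝕜) • ⇑(b a) := by
    simpa [T] using congrArg WithLp.ofLp (hb a i)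
  let U : unitaryGroup n 𝕜 := ⟨(EuclideanSpace.basisFun n 𝕜).toBasis.toMatrix b.toBasis,
    (EuclideanSpace.basisFun n 𝕜).toMatrix_orthonormalBasis_mem_unitary b⟩
  refine ⟨U, fun i a => χ a i, fun i => ?_⟩
  have hU : A i * (U : Matrix n n 𝕜) =
      (U : Matrix n n 𝕜) * diagonal (RCLike.ofReal ∘ fun a => χ a i) := by
    ext x a
    rw [mul_diagonal]
    simpa [U, mul_comm, Basis.toMatrix_apply, mul_apply, mulVec, dotProduct] using
      congrFun (hbv a i) x
  rw [conjStarAlgAut_apply, ← hU, mul_assoc, Unitary.mul_star_self_of_mem U.2, mul_one]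

theorem Matrix.posSemidef_conjStarAlgAut_diagonal_iff {𝕜 n : Type*} [RCLike 𝕜] [Fintype n]
    [DecidableEq n] (U : unitaryGroup n 𝕜) {d : n → ℝ} :
    (conjStarAlgAut 𝕜 _ U (diagonal (RCLike.ofReal ∘ d))).PosSemidef ↔ 0 ≤ d := by
  rw [conjStarAlgAut_apply, (Unitary.isUnit_coe ..).posSemidef_star_right_conjugate_iff,
    posSemidef_diagonal_iff]
  simp only [Function.comp_apply, RCLike.ofReal_nonneg, Pi.le_def, Pi.zero_apply]

theorem Matrix.PosSemidef.exists_trace_mul_conjStarAlgAut_diagonal {𝕜 n : Type*} [RCLike 𝕜]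
    [Fintype n] [DecidableEq n] {ρ : Matrix n n 𝕜} (hρ : ρ.PosSemidef)
    (U : unitaryGroup n 𝕜) :
    ∃ p : n → ℝ, 0 ≤ p ∧ ∀ e : n → ℝ,
      (ρ * conjStarAlgAut 𝕜 _ U (diagonal (RCLike.ofReal ∘ e))).trace =
        ((∑ i, p i * e i : ℝ) : 𝕜) := by
  set M := star (U : Matrix n n 𝕜) * ρ * U
  have hM : M.PosSemidef := hρ.conjTranspose_mul_mul_same _
  refine ⟨fun i => RCLike.re (M i i), fun i => (RCLike.nonneg_iff.mp hM.diag_nonneg).1,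
    fun e => ?_⟩
  rw [conjStarAlgAut_apply, ← mul_assoc, trace_mul_cycle, ← mul_assoc]
  change (M * _).trace = _
  simp only [trace, diag_apply, mul_diagonal, Function.comp_apply, RCLike.ofReal_sum,
    RCLike.ofReal_mul, hM.isHermitian.coe_re_apply_self]

theorem ENNReal.sum_prod_rpow_le_prod_sum_rpow {ι κ : Type*} [Fintype ι] (s : Finset κ)
    (f : κ → ι → ℝ≥0∞) {p : κ → ℝ} (hp : ∑ k ∈ s, p k = 1) (hp₀ : ∀ k ∈ s, 0 ≤ p k) :
    ∑ i, ∏ k ∈ s, f k i ^ p k ≤ ∏ k ∈ s, (∑ i, f k i) ^ p k := by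
  let _ : MeasurableSpace ι := ⊤
  have : DiscreteMeasurableSpace ι := ⟨fun _ => trivial⟩
  simpa [lintegral_count, tsum_fintype] using lintegral_prod_norm_pow_le (μ := Measure.count) s
    (fun k _ => (measurable_of_countable (f k)).aemeasurable) hp hp₀

theorem Real.sum_mul_prod_le_prod_sum_mul_pow_rpow {ι κ : Type*} [Fintype ι] [Fintype κ]
    [Nonempty κ] {w : ι → ℝ} (hw : 0 ≤ w) {f : κ → ι → ℝ} (hf : 0 ≤ f) :
    ∑ i, w i * ∏ k, f k i ≤
      ∏ k, (∑ i, w i * f k i ^ Fintype.card κ) ^ (Fintype.card κ : ℝ)⁻¹ := by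
  set c := Fintype.card κ
  have hc : c ≠ 0 := Fintype.card_ne_zero
  have hc' : (0 : ℝ) ≤ (c : ℝ)⁻¹ := by positivity
  have h0 k i : 0 ≤ w i * f k i ^ c := mul_nonneg (hw i) (pow_nonneg (hf k i) c)
  have hS k : 0 ≤ (∑ i, w i * f k i ^ c) ^ (c : ℝ)⁻¹ :=
    Real.rpow_nonneg (sum_nonneg fun i _ => h0 k i) _
  have hfactor i k : (w i * f k i ^ c) ^ (c : ℝ)⁻¹ = w i ^ (c : ℝ)⁻¹ * f k i := by
    rw [Real.mul_rpow (hw i) (pow_nonneg (hf k i) c), Real.pow_rpow_inv_natCast (hf k i) hc]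
  have hterm i : ∏ k, (w i * f k i ^ c) ^ (c : ℝ)⁻¹ = w i * ∏ k, f k i := by
    rw [prod_congr rfl fun k _ => hfactor i k, prod_mul_distrib, prod_const, card_univ,
      Real.rpow_inv_natCast_pow (hw i) hc]
  have key := ENNReal.sum_prod_rpow_le_prod_sum_rpow univ
    (fun k i => ENNReal.ofReal (w i * f k i ^ c)) (p := fun _ => (c : ℝ)⁻¹)
    (by simp [c, hc]) (fun _ _ => hc')
  simp_rw [← ENNReal.ofReal_sum_of_nonneg (fun i _ => h0 _ i),
    ENNReal.ofReal_rpow_of_nonneg (h0 _ _) hc',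
    ENNReal.ofReal_rpow_of_nonneg (sum_nonneg fun i _ => h0 _ i) hc',
    ← ENNReal.ofReal_prod_of_nonneg (fun k _ => Real.rpow_nonneg (h0 k _) _), hterm] at key
  rwa [← ENNReal.ofReal_sum_of_nonneg fun i _ => mul_nonneg (hw i) (prod_nonneg fun k _ => hf k i),
    ← ENNReal.ofReal_prod_of_nonneg fun k _ => hS k,
    ENNReal.ofReal_le_ofReal_iff (prod_nonneg fun k _ => hS k)] at key

theorem stmt_5_general {n m : ℕ} (hm : 1 ≤ m)
    (ρ : Matrix (Fin n) (Fin n) ℂ) (hρ : ρ.PosSemidef)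
    (N : Fin m → Matrix (Fin n) (Fin n) ℂ)
    (hN : ∀ k, (N k).PosSemidef)
    (hcomm : ∀ j k, N j * N k = N k * N j) :
    0 ≤ (ρ * (List.ofFn N).prod).trace.re ∧
    (ρ * (List.ofFn N).prod).trace.im = 0 ∧
    (ρ * (List.ofFn N).prod).trace.re
      ≤ ∏ k : Fin m, ((ρ * (N k) ^ m).trace.re) ^ ((1 : ℝ) / (m : ℝ)) := by
  obtain ⟨U, d, hNd⟩ := IsHermitian.exists_unitary_eq_conjStarAlgAut_diagonal_of_pairwise_commute
    (fun k => (hN k).isHermitian) (fun j k _ => hcomm j k)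
  have hd k : 0 ≤ d k := (posSemidef_conjStarAlgAut_diagonal_iff U).mp (hNd k ▸ hN k)
  obtain ⟨p, hp, htr⟩ := hρ.exists_trace_mul_conjStarAlgAut_diagonal U
  -- Packaging `e ↦ U diag(e) Uᴴ` as a ring hom turns products and powers of the `N k` into
  -- pointwise products and powers of the `d k`.
  let φ : (Fin n → ℝ) →+* Matrix (Fin n) (Fin n) ℂ :=
    (conjStarAlgAut ℂ _ U : Matrix (Fin n) (Fin n) ℂ →+* _).comp
      ((diagonalRingHom (Fin n) ℂ).comp ((algebraMap ℝ ℂ).compLeft (Fin n)))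
  have hφ e : φ e = conjStarAlgAut ℂ _ U (diagonal (RCLike.ofReal ∘ e)) := rfl
  have hprod : (List.ofFn N).prod = φ (∏ k, d k) := by
    rw [← List.prod_ofFn, map_list_prod, List.map_ofFn]
    exact congrArg List.prod (List.ofFn_inj.mpr (funext fun k => (hNd k).trans (hφ _).symm))
  have hpow k : N k ^ m = φ (d k ^ m) := by rw [map_pow, hφ, ← hNd]
  simp only [hprod, hpow, hφ, htr]
  simp only [RCLike.ofReal_eq_complex_ofReal, Complex.ofReal_re, Complex.ofReal_im,
    Finset.prod_apply, Pi.pow_apply]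
  have : Nonempty (Fin m) := Fin.pos_iff_nonempty.mp hm
  refine ⟨sum_nonneg fun i _ => mul_nonneg (hp i) (prod_nonneg fun k _ => hd k i), trivial, ?_⟩
  simpa using Real.sum_mul_prod_le_prod_sum_mul_pow_rpow hp hd

/-- Trace Hölder inequality for commuting PSD matrices:
`tr(ρ·N₁⋯N_m)` is a nonnegative real and is at most
`∏_k tr(ρ·N_k^m)^(1/m)`. -/
theorem stmt_5 {n m : ℕ} (hn : 1 ≤ n) (hm : 1 ≤ m)
    (ρ : Matrix (Fin n) (Fin n) ℂ) (hρ : ρ.PosSemidef)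
    (N : Fin m → Matrix (Fin n) (Fin n) ℂ)
    (hN : ∀ k, (N k).PosSemidef)
    (hcomm : ∀ j k, N j * N k = N k * N j) :
    0 ≤ (ρ * (List.ofFn N).prod).trace.re ∧
    (ρ * (List.ofFn N).prod).trace.im = 0 ∧
    (ρ * (List.ofFn N).prod).trace.re
      ≤ ∏ k : Fin m, ((ρ * (N k) ^ m).trace.re) ^ ((1 : ℝ) / (m : ℝ)) :=
  stmt_5_general hm ρ hρ N hN hcomm
end

section
/- Let ρ, A, B be PSD n×n complex matrices with AB = BA, and let s ≤ p be natural numbers with p ≥ 1. Then tr(ρ·Aˢ·B^(p−s)) is a nonnegative real number and tr(ρ·Aˢ·B^(p−s)) ≤ ( tr(ρ·A^p) )^(s/p) · ( tr(ρ·B^p) )^((p−s)/p), where the outer exponents are real powers of the nonnegative real traces. -/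
/-!
For commuting PSD matrices `A`, `B` the sequence `i ↦ Re tr(ρ Aⁱ B^(p-i))` is convex: its second
differences are `tr(ρ Aⁱ Bʲ (A - B)²) ≥ 0`, since products of commuting PSD matrices are PSD.
Convexity between `i = 0` and `i = p` is the trace Young inequality
`p tr(ρ Aˢ Bᵗ) ≤ s tr(ρ Aᵖ) + t tr(ρ Bᵖ)`. Applied to `cA` and `dB` and optimised over the
scalings `c, d > 0` it becomes Hölder's inequality; vanishing traces are handled by perturbing
them by `ε` and letting `ε → 0`.
-/

open scoped Matrix ComplexOrder

theorem Commute.pow_mul_pow_mul_sub_sq {R : Type*} [Ring R] {a b : R} (h : Commute a b)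
    (i j : ℕ) :
    a ^ i * b ^ j * (a - b) ^ 2
      = a ^ (i + 2) * b ^ j - 2 • (a ^ (i + 1) * b ^ (j + 1)) + a ^ i * b ^ (j + 2) := by
  have hc : Commute (b ^ j) ((a - b) ^ 2) :=
    ((h.symm.sub_right (Commute.refl b)).pow_right 2).pow_left j
  rw [mul_assoc, hc.eq, h.sub_sq, pow_add a i 2, pow_succ a i, pow_succ' b j, add_comm j 2,
    pow_add b 2]
  noncomm_ring

open Finset in
theorem add_mul_le_of_two_mul_le_add {f : ℕ → ℝ} {a b : ℕ}
    (hf : ∀ i, i + 2 ≤ a + b → 2 * f (i + 1) ≤ f i + f (i + 2)) :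
    (a + b : ℝ) * f a ≤ a * f (a + b) + b * f 0 := by
  obtain rfl | ha := Nat.eq_zero_or_pos a
  · simp
  have hmono : ∀ i j, i ≤ j → j + 1 ≤ a + b → f (i + 1) - f i ≤ f (j + 1) - f j := by
    intro i j hij hj
    induction j, hij using Nat.le_induction with
    | base => rfl
    | succ j _ ih => exact (ih (by omega)).trans (by linarith [hf j (by omega)])
  set c := f a - f (a - 1)
  have hleft : f a - f 0 ≤ a * c := by
    have h := sum_le_card_nsmul (range a) (fun i ↦ f (i + 1) - f i) c fun i hi ↦ by
      simpa [c, Nat.sub_add_cancel ha] using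
        hmono i (a - 1) (by have := mem_range.mp hi; omega) (by omega)
    rwa [sum_range_sub f, card_range, nsmul_eq_mul] at h
  have hright : b * c ≤ f (a + b) - f a := by
    have h := card_nsmul_le_sum (range b) (fun i ↦ f (a + (i + 1)) - f (a + i)) c fun i hi ↦ by
      simpa [c, Nat.sub_add_cancel ha, add_assoc] using
        hmono (a - 1) (a + i) (by omega) (by have := mem_range.mp hi; omega)
    rwa [sum_range_sub (fun i ↦ f (a + i)), card_range, nsmul_eq_mul, add_zero] at h
  nlinarith [mul_le_mul_of_nonneg_left hleft b.cast_nonneg,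
    mul_le_mul_of_nonneg_left hright a.cast_nonneg]

theorem le_pow_mul_pow_of_forall_le {s t : ℕ} {T u v : ℝ} (hst : 0 < s + t) (hu : 0 < u)
    (hv : 0 < v) (H : ∀ c d : ℝ, 0 < c → 0 < d →
      (s + t : ℝ) * (c ^ s * d ^ t * T)
        ≤ s * (c ^ (s + t) * u ^ (s + t)) + t * (d ^ (s + t) * v ^ (s + t))) :
    T ≤ u ^ s * v ^ t := by
  have h := H u⁻¹ v⁻¹ (inv_pos.mpr hu) (inv_pos.mpr hv)
  rw [← mul_pow, ← mul_pow, inv_mul_cancel₀ hu.ne', inv_mul_cancel₀ hv.ne', one_pow, mul_one,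
    mul_one, inv_pow, inv_pow, ← mul_inv] at h
  have h' := le_of_mul_le_mul_left (h.trans_eq (mul_one _).symm) (by exact_mod_cast hst)
  rwa [inv_mul_le_iff₀ (by positivity), mul_one] at h'

open Filter in
theorem le_rpow_mul_rpow_of_forall_le {s t : ℕ} {T X Y : ℝ} (hst : 0 < s + t) (hX : 0 ≤ X)
    (hY : 0 ≤ Y) (H : ∀ c d : ℝ, 0 < c → 0 < d →
      (s + t : ℝ) * (c ^ s * d ^ t * T) ≤ s * (c ^ (s + t) * X) + t * (d ^ (s + t) * Y)) :
    T ≤ X ^ ((s : ℝ) / (s + t)) * Y ^ ((t : ℝ) / (s + t)) := by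
  have hone : ((s + t : ℕ) : ℝ) / (s + t) = 1 := by
    push_cast
    exact div_self (by exact_mod_cast hst.ne')
  have hroot : ∀ Z : ℝ, 0 ≤ Z → ∀ k : ℕ, (Z ^ ((s + t : ℝ)⁻¹)) ^ k = Z ^ ((k : ℝ) / (s + t)) :=
    fun Z hZ k ↦ by rw [← Real.rpow_mul_natCast hZ, inv_mul_eq_div]
  have hperturbed : ∀ ε : ℝ, 0 < ε →
      T ≤ (X + ε) ^ ((s : ℝ) / (s + t)) * (Y + ε) ^ ((t : ℝ) / (s + t)) := by
    intro ε hε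
    rw [← hroot _ (by positivity), ← hroot _ (by positivity)]
    refine le_pow_mul_pow_of_forall_le hst (by positivity) (by positivity) fun c d hc hd ↦ ?_
    rw [hroot _ (by positivity), hroot _ (by positivity), hone, Real.rpow_one, Real.rpow_one]
    refine (H c d hc hd).trans ?_
    gcongr <;> linarith
  have hcont : Continuous fun ε : ℝ ↦
      (X + ε) ^ ((s : ℝ) / (s + t)) * (Y + ε) ^ ((t : ℝ) / (s + t)) :=
    ((Real.continuous_rpow_const (by positivity)).comp (continuous_const_add X)).mul
      ((Real.continuous_rpow_const (by positivity)).comp (continuous_const_add Y))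
  simpa using ge_of_tendsto ((hcont.tendsto 0).mono_left nhdsWithin_le_nhds)
    (eventually_nhdsWithin_of_forall (s := Set.Ioi 0) hperturbed)

namespace Matrix.PosSemidef

variable {𝕜 n : Type*} [RCLike 𝕜] [Fintype n] [DecidableEq n]

open MatrixOrder

theorem trace_mul_nonneg {ρ M : Matrix n n 𝕜} (hρ : ρ.PosSemidef) (hM : M.PosSemidef) :
    0 ≤ (ρ * M).trace := by
  obtain ⟨X, rfl⟩ := CStarAlgebra.nonneg_iff_eq_star_mul_self.mp hρ.nonneg
  rw [star_eq_conjTranspose, Matrix.mul_assoc, trace_mul_comm]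
  exact (hM.mul_mul_conjTranspose_same X).trace_nonneg

theorem pow_mul_pow {A B : Matrix n n 𝕜} (hA : A.PosSemidef) (hB : B.PosSemidef)
    (h : Commute A B) (i j : ℕ) : (A ^ i * B ^ j).PosSemidef :=
  nonneg_iff_posSemidef.mp ((h.pow_pow i j).mul_nonneg (hA.pow i).nonneg (hB.pow j).nonneg)

theorem re_trace_mul_pow_mul_pow_le {ρ A B : Matrix n n 𝕜} (hρ : ρ.PosSemidef)
    (hA : A.PosSemidef) (hB : B.PosSemidef) (h : Commute A B) (s t : ℕ) :
    (s + t : ℝ) * RCLike.re (ρ * (A ^ s * B ^ t)).trace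
      ≤ s * RCLike.re (ρ * A ^ (s + t)).trace + t * RCLike.re (ρ * B ^ (s + t)).trace := by
  have hconvex : ∀ i j, 2 * RCLike.re (ρ * (A ^ (i + 1) * B ^ (j + 1))).trace
      ≤ RCLike.re (ρ * (A ^ i * B ^ (j + 2))).trace
        + RCLike.re (ρ * (A ^ (i + 2) * B ^ j)).trace := by
    intro i j
    have hsq : 0 ≤ (A - B) ^ 2 := IsSelfAdjoint.sq_nonneg (hA.1.sub hB.1)
    have hcomm : Commute (A ^ i * B ^ j) ((A - B) ^ 2) :=
      (((Commute.refl A).sub_right h).pow_pow i 2).mul_left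
        ((h.symm.sub_right (Commute.refl B)).pow_pow j 2)
    have hpsd := nonneg_iff_posSemidef.mp (hcomm.mul_nonneg (hA.pow_mul_pow hB h i j).nonneg hsq)
    have := (RCLike.nonneg_iff.mp (hρ.trace_mul_nonneg hpsd)).1
    rw [h.pow_mul_pow_mul_sub_sq, Matrix.mul_add, Matrix.mul_sub, Matrix.mul_smul, trace_add,
      trace_sub, trace_smul, map_add, map_sub, map_nsmul, nsmul_eq_mul, Nat.cast_ofNat] at this
    linarith
  have := add_mul_le_of_two_mul_le_add (a := s) (b := t)
    (f := fun i ↦ RCLike.re (ρ * (A ^ i * B ^ (s + t - i))).trace) fun i hi ↦ by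
      obtain ⟨j, hj⟩ := Nat.exists_eq_add_of_le hi
      rw [hj, show i + 2 + j - (i + 1) = j + 1 by omega, show i + 2 + j - i = j + 2 by omega,
        show i + 2 + j - (i + 2) = j by omega]
      exact hconvex i j
  simpa using this

end Matrix.PosSemidef

theorem stmt_6_general {n : ℕ}
    (ρ A B : Matrix (Fin n) (Fin n) ℂ)
    (hρ : ρ.PosSemidef) (hA : A.PosSemidef) (hB : B.PosSemidef)
    (hAB : A * B = B * A)
    (s p : ℕ) (hsp : s ≤ p) (hp : 1 ≤ p) :
    0 ≤ (ρ * (A ^ s * B ^ (p - s))).trace.re ∧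
    (ρ * (A ^ s * B ^ (p - s))).trace.im = 0 ∧
    (ρ * (A ^ s * B ^ (p - s))).trace.re
      ≤ ((ρ * A ^ p).trace.re) ^ ((s : ℝ) / (p : ℝ))
        * ((ρ * B ^ p).trace.re) ^ (((p : ℝ) - (s : ℝ)) / (p : ℝ)) := by
  obtain ⟨t, rfl⟩ := Nat.exists_eq_add_of_le hsp
  rw [Nat.add_sub_cancel_left]
  have h : Commute A B := hAB
  obtain ⟨hT, hTim⟩ := Complex.nonneg_iff.mp (hρ.trace_mul_nonneg (hA.pow_mul_pow hB h s t))
  refine ⟨hT, hTim.symm, ?_⟩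
  have hX := (Complex.nonneg_iff.mp (hρ.trace_mul_nonneg (hA.pow (s + t)))).1
  have hY := (Complex.nonneg_iff.mp (hρ.trace_mul_nonneg (hB.pow (s + t)))).1
  have hscaled : ∀ c d : ℝ, 0 < c → 0 < d →
      (s + t : ℝ) * (c ^ s * d ^ t * (ρ * (A ^ s * B ^ t)).trace.re)
        ≤ s * (c ^ (s + t) * (ρ * A ^ (s + t)).trace.re)
          + t * (d ^ (s + t) * (ρ * B ^ (s + t)).trace.re) := fun c d hc hd ↦ by
    have := hρ.re_trace_mul_pow_mul_pow_le (hA.smul hc.le) (hB.smul hd.le)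
      ((h.smul_left c).smul_right d) s t
    rwa [smul_pow, smul_pow, smul_mul_smul_comm, Matrix.mul_smul, Matrix.trace_smul,
      RCLike.smul_re, smul_pow, Matrix.mul_smul, Matrix.trace_smul, RCLike.smul_re, smul_pow,
      Matrix.mul_smul, Matrix.trace_smul, RCLike.smul_re] at this
  have := le_rpow_mul_rpow_of_forall_le (by omega) hX hY hscaled
  rwa [Nat.cast_add, add_sub_cancel_left]

/-- Two-factor trace Hölder inequality: for PSD matrices `ρ, A, B` with
`AB = BA` and naturals `s ≤ p`, `p ≥ 1`, the trace `tr(ρ·Aˢ·B^(p−s))` is a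
nonnegative real and is at most `tr(ρ·A^p)^(s/p) · tr(ρ·B^p)^((p−s)/p)`. -/
theorem stmt_6 {n : ℕ} (hn : 1 ≤ n)
    (ρ A B : Matrix (Fin n) (Fin n) ℂ)
    (hρ : ρ.PosSemidef) (hA : A.PosSemidef) (hB : B.PosSemidef)
    (hAB : A * B = B * A)
    (s p : ℕ) (hsp : s ≤ p) (hp : 1 ≤ p) :
    0 ≤ (ρ * (A ^ s * B ^ (p - s))).trace.re ∧
    (ρ * (A ^ s * B ^ (p - s))).trace.im = 0 ∧
    (ρ * (A ^ s * B ^ (p - s))).trace.re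
      ≤ ((ρ * A ^ p).trace.re) ^ ((s : ℝ) / (p : ℝ))
        * ((ρ * B ^ p).trace.re) ^ (((p : ℝ) - (s : ℝ)) / (p : ℝ)) :=
  stmt_6_general ρ A B hρ hA hB hAB s p hsp hp
end

section
/- Let N and σ be PSD n×n complex matrices, let P be an orthogonal projection (P² = P = Pᴴ) with NP = PN, let q̄ > 0 be real with q̄·P ≼ N·P in the Loewner order, and let s ≤ p be natural numbers. Then tr(Nˢ·P·σ) is a nonnegative real number and q̄^(p−s) · tr(Nˢ·P·σ) ≤ tr(N^p·σ). -/
/-!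
Multiplying a Loewner inequality by a nonnegative element commuting with both sides preserves
it, because commuting nonnegative elements have a nonnegative product. Starting from
`Nˢ P ≤ Nˢ` (as `P ≤ 1`) and using `q P ≤ N P` once per step, this gives
`q^(p-s) Nˢ P ≤ Nᵖ`; the functional `X ↦ tr(X σ)` is positive for `σ ≥ 0`, which turns
this into the trace inequality.
-/

open scoped Matrix ComplexOrder

open scoped MatrixOrder Matrix.Norms.L2Operator

section CStarAlgebra

variable {A : Type*} [CStarAlgebra A] [PartialOrder A] [StarOrderedRing A]

theorem mul_le_mul_of_nonneg_left_of_commute {a b c : A} (hab : a ≤ b) (hc : 0 ≤ c)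
    (hca : Commute c a) (hcb : Commute c b) : c * a ≤ c * b := by
  rw [← sub_nonneg, ← mul_sub]
  exact (hcb.sub_right hca).mul_nonneg hc (sub_nonneg.2 hab)

theorem IsStarProjection.smul_pow_mul_le_pow_add {N P : A} {q : ℝ} (hP : IsStarProjection P)
    (hN : 0 ≤ N) (hNP : Commute N P) (hq : 0 ≤ q) (hdom : q • P ≤ N * P) (s k : ℕ) :
    q ^ k • (N ^ s * P) ≤ N ^ (s + k) := by
  have hNsP : Commute (N ^ s) P := hNP.pow_left s
  induction k with
  | zero =>
    simpa using mul_le_mul_of_nonneg_left_of_commute hP.le_one (CStarAlgebra.pow_nonneg hN s)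
      hNsP (Commute.one_right _)
  | succ k ih =>
    calc q ^ (k + 1) • (N ^ s * P) = q ^ k • (N ^ s * (q • P)) := by
          rw [mul_smul_comm, smul_smul, pow_succ]
      _ ≤ q ^ k • (N ^ s * (N * P)) :=
          smul_le_smul_of_nonneg_left
            (mul_le_mul_of_nonneg_left_of_commute hdom (CStarAlgebra.pow_nonneg hN s)
              (hNsP.smul_right q) (((Commute.refl N).pow_left s).mul_right hNsP))
            (pow_nonneg hq k)
      _ = N * (q ^ k • (N ^ s * P)) := by
          rw [mul_smul_comm, ← mul_assoc, ← mul_assoc, ← pow_succ, pow_succ']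
      _ ≤ N * N ^ (s + k) :=
          mul_le_mul_of_nonneg_left_of_commute ih hN
            ((((Commute.refl N).pow_right s).mul_right hNP).smul_right _)
            ((Commute.refl N).pow_right _)
      _ = N ^ (s + (k + 1)) := by rw [← pow_succ', add_assoc]

end CStarAlgebra

namespace Matrix

variable {𝕜 n : Type*} [RCLike 𝕜] [Fintype n] [DecidableEq n]

theorem trace_mul_nonneg {A B : Matrix n n 𝕜} (hA : 0 ≤ A) (hB : 0 ≤ B) :
    0 ≤ (A * B).trace := by
  obtain ⟨X, rfl⟩ := CStarAlgebra.nonneg_iff_eq_star_mul_self.mp hA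
  rw [mul_assoc, trace_mul_comm, star_eq_conjTranspose]
  exact ((nonneg_iff_posSemidef.mp hB).mul_mul_conjTranspose_same X).trace_nonneg

theorem trace_mul_le_trace_mul {A B C : Matrix n n 𝕜} (hAB : A ≤ B) (hC : 0 ≤ C) :
    (A * C).trace ≤ (B * C).trace := by
  rw [← sub_nonneg, ← trace_sub, ← sub_mul]
  exact trace_mul_nonneg (sub_nonneg.2 hAB) hC

end Matrix

theorem stmt_7_general {n : ℕ}
    (N σ P : Matrix (Fin n) (Fin n) ℂ)
    (hN : N.PosSemidef) (hσ : σ.PosSemidef)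
    (hP2 : P * P = P) (hPH : Pᴴ = P) (hNP : N * P = P * N)
    (q : ℝ) (hq : 0 < q)
    (hdom : (N * P - (q : ℂ) • P).PosSemidef)
    (s p : ℕ) (hsp : s ≤ p) :
    0 ≤ (N ^ s * P * σ).trace.re ∧
    (N ^ s * P * σ).trace.im = 0 ∧
    q ^ (p - s) * (N ^ s * P * σ).trace.re ≤ (N ^ p * σ).trace.re := by
  have hP : IsStarProjection P := ⟨hP2, hPH⟩
  have hqP : q • P ≤ N * P := by rwa [Matrix.le_iff, ← Complex.coe_smul]
  have hpos : 0 ≤ (N ^ s * P * σ).trace :=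
    Matrix.trace_mul_nonneg ((Commute.pow_left hNP s).mul_nonneg
      (CStarAlgebra.pow_nonneg hN.nonneg s) hP.nonneg) hσ.nonneg
  have hmarkov : q ^ (p - s) • (N ^ s * P) ≤ N ^ p := by
    simpa [Nat.add_sub_cancel' hsp] using
      hP.smul_pow_mul_le_pow_add hN.nonneg hNP hq.le hqP s (p - s)
  have htr := Matrix.trace_mul_le_trace_mul hmarkov hσ.nonneg
  rw [smul_mul_assoc, Matrix.trace_smul] at htr
  obtain ⟨hre, him⟩ := Complex.nonneg_iff.mp hpos
  have hre_le := (Complex.le_def.mp htr).1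
  rw [Complex.smul_re] at hre_le
  exact ⟨hre, him.symm, hre_le⟩

/-- Markov-type inequality: if `N, σ` are PSD, `P` is an orthogonal projection
commuting with `N`, `q̄ > 0` and `q̄·P ≼ N·P` (Loewner), then for naturals
`s ≤ p` the trace `tr(Nˢ·P·σ)` is a nonnegative real and
`q̄^(p−s) · tr(Nˢ·P·σ) ≤ tr(N^p·σ)`. -/
theorem stmt_7 {n : ℕ} (hn : 1 ≤ n)
    (N σ P : Matrix (Fin n) (Fin n) ℂ)
    (hN : N.PosSemidef) (hσ : σ.PosSemidef)
    (hP2 : P * P = P) (hPH : Pᴴ = P) (hNP : N * P = P * N)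
    (q : ℝ) (hq : 0 < q)
    (hdom : (N * P - (q : ℂ) • P).PosSemidef)
    (s p : ℕ) (hsp : s ≤ p) :
    0 ≤ (N ^ s * P * σ).trace.re ∧
    (N ^ s * P * σ).trace.im = 0 ∧
    q ^ (p - s) * (N ^ s * P * σ).trace.re ≤ (N ^ p * σ).trace.re :=
  stmt_7_general N σ P hN hσ hP2 hPH hNP q hq hdom s p hsp
end

section
/- Let n ≥ 1 and m ≥ 1, let H, O, ρ, U₁, …, U_m be n×n complex matrices and τ ∈ ℝ. For s ∈ ℝ and a matrix A set α_s(A) := exp(isH)·A·exp(−isH). Define O⁽⁰⁾ := O and O⁽ʲ⁾ := U_jᴴ·O⁽ʲ⁻¹⁾·U_j for 1 ≤ j ≤ m. Then tr[ ρ · ( α_{mτ}(O) − (U₁U₂⋯U_m)ᴴ · O · (U₁U₂⋯U_m) ) ] = Σ_{j=1}^m tr[ α_{(j−m)τ}(ρ) · ( α_τ(O⁽ʲ⁻¹⁾) − O⁽ʲ⁾ ) ]. -/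
/-!
Put `f j := tr[ρ · α_{(m−j)τ}(O⁽ʲ⁾)]`. Because `α` is a one-parameter group that moves
across the trace pairing as `tr[α_s(ρ) X] = tr[ρ α_{−s}(X)]`, the `j`-th summand is exactly
`f j − f (j+1)`, so the sum telescopes to `f 0 − f m = tr[ρ (α_{mτ}(O) − O⁽ᵐ⁾)]`; finally
`O⁽ᵐ⁾ = (U₁⋯U_m)ᴴ O (U₁⋯U_m)` by unfolding the recursion.
-/

open scoped Matrix

/-- Heisenberg evolution `α_s(A) = exp(isH)·A·exp(−isH)`. -/
noncomputable def heis {n : ℕ} (H : Matrix (Fin n) (Fin n) ℂ) (s : ℝ)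
    (A : Matrix (Fin n) (Fin n) ℂ) : Matrix (Fin n) (Fin n) ℂ :=
  NormedSpace.exp ((Complex.I * (s : ℂ)) • H) * A
    * NormedSpace.exp ((-(Complex.I * (s : ℂ))) • H)

theorem eq_star_prod_mul_mul_prod {R : Type*} [Monoid R] [StarMul R] (U X : ℕ → R)
    (hX : ∀ j, X (j + 1) = star (U (j + 1)) * X j * U (j + 1)) (k : ℕ) :
    X k = star ((List.range k).map (fun j => U (j + 1))).prod * X 0
      * ((List.range k).map (fun j => U (j + 1))).prod := by
  induction k with
  | zero => simp
  | succ k ih =>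
    rw [hX, ih, List.range_succ, List.map_append, List.prod_append]
    simp only [List.map_cons, List.map_nil, List.prod_cons, List.prod_nil, mul_one, star_mul,
      mul_assoc]

theorem Matrix.exp_add_smul {ι : Type*} [Fintype ι] [DecidableEq ι] (H : Matrix ι ι ℂ)
    (a b : ℂ) :
    NormedSpace.exp ((a + b) • H) = NormedSpace.exp (a • H) * NormedSpace.exp (b • H) := by
  rw [add_smul]
  exact Matrix.exp_add_of_commute _ _ (((Commute.refl H).smul_left a).smul_right b)

section heis

variable {n : ℕ} (H : Matrix (Fin n) (Fin n) ℂ)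

theorem heis_zero (A : Matrix (Fin n) (Fin n) ℂ) : heis H 0 A = A := by
  simp [heis]

theorem heis_heis (s t : ℝ) (A : Matrix (Fin n) (Fin n) ℂ) :
    heis H s (heis H t A) = heis H (s + t) A := by
  have hpos : Complex.I * ((s + t : ℝ) : ℂ) = Complex.I * s + Complex.I * t := by
    push_cast; ring
  have hneg : -(Complex.I * ((s + t : ℝ) : ℂ)) = -(Complex.I * t) + -(Complex.I * s) := by
    push_cast; ring
  simp only [heis]
  rw [hneg, hpos, Matrix.exp_add_smul, Matrix.exp_add_smul]
  simp only [mul_assoc]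

theorem heis_sub (s : ℝ) (A B : Matrix (Fin n) (Fin n) ℂ) :
    heis H s (A - B) = heis H s A - heis H s B := by
  simp only [heis, Matrix.mul_sub, Matrix.sub_mul]

theorem trace_heis_mul (s : ℝ) (ρ X : Matrix (Fin n) (Fin n) ℂ) :
    (heis H s ρ * X).trace = (ρ * heis H (-s) X).trace := by
  simp only [heis, Complex.ofReal_neg, mul_neg, neg_neg]
  rw [mul_assoc, mul_assoc, Matrix.trace_mul_comm]
  simp only [mul_assoc]

theorem trace_mul_heis_sub_eq_sum (ρ : Matrix (Fin n) (Fin n) ℂ) (τ : ℝ) (m : ℕ)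
    (X : ℕ → Matrix (Fin n) (Fin n) ℂ) :
    (ρ * (heis H (m * τ) (X 0) - X m)).trace
      = ∑ j ∈ Finset.range m,
          (heis H (((j : ℝ) + 1 - m) * τ) ρ * (heis H τ (X j) - X (j + 1))).trace := by
  set f : ℕ → ℂ := fun j => (ρ * heis H ((m - j : ℝ) * τ) (X j)).trace
  have hterm : ∀ j ∈ Finset.range m,
      (heis H (((j : ℝ) + 1 - m) * τ) ρ * (heis H τ (X j) - X (j + 1))).trace
        = f j - f (j + 1) := by
    intro j _
    have hstep : -(((j : ℝ) + 1 - m) * τ) + τ = (m - j) * τ := by ring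
    have hnext : -(((j : ℝ) + 1 - m) * τ) = (m - ((j + 1 : ℕ) : ℝ)) * τ := by
      push_cast; ring
    rw [trace_heis_mul, heis_sub, heis_heis, hstep, hnext, Matrix.mul_sub, Matrix.trace_sub]
  rw [Finset.sum_congr rfl hterm, Finset.sum_range_sub', Matrix.mul_sub, Matrix.trace_sub]
  simp [f, heis_zero]

end heis

theorem stmt_9_general {n m : ℕ}
    (H O ρ : Matrix (Fin n) (Fin n) ℂ)
    (U : ℕ → Matrix (Fin n) (Fin n) ℂ) (τ : ℝ)
    (Oseq : ℕ → Matrix (Fin n) (Fin n) ℂ)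
    (hO0 : Oseq 0 = O)
    (hOrec : ∀ j : ℕ, Oseq (j + 1) = (U (j + 1))ᴴ * Oseq j * U (j + 1)) :
    (ρ * (heis H ((m : ℝ) * τ) O
        - ((List.range m).map (fun j => U (j + 1))).prodᴴ * O
            * ((List.range m).map (fun j => U (j + 1))).prod)).trace
      = ∑ j ∈ Finset.range m,
          (heis H ((((j : ℝ) + 1) - (m : ℝ)) * τ) ρ
            * (heis H τ (Oseq j) - Oseq (j + 1))).trace := by
  have hOm := eq_star_prod_mul_mul_prod U Oseq hOrec m
  rw [hO0] at hOm
  rw [← Matrix.star_eq_conjTranspose, ← hOm, ← hO0]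
  exact trace_mul_heis_sub_eq_sum H ρ τ m Oseq

/-- Telescoping identity for the concatenation of local unitaries:
`tr[ρ·(α_{mτ}(O) − (U₁⋯U_m)ᴴ·O·(U₁⋯U_m))]
  = Σ_{j=1}^m tr[α_{(j−m)τ}(ρ)·(α_τ(O⁽ʲ⁻¹⁾) − O⁽ʲ⁾)]`,
where `O⁽⁰⁾ = O` and `O⁽ʲ⁾ = U_jᴴ·O⁽ʲ⁻¹⁾·U_j`. -/
theorem stmt_9 {n m : ℕ} (hn : 1 ≤ n) (hm : 1 ≤ m)
    (H O ρ : Matrix (Fin n) (Fin n) ℂ)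
    (U : ℕ → Matrix (Fin n) (Fin n) ℂ) (τ : ℝ)
    (Oseq : ℕ → Matrix (Fin n) (Fin n) ℂ)
    (hO0 : Oseq 0 = O)
    (hOrec : ∀ j : ℕ, Oseq (j + 1) = (U (j + 1))ᴴ * Oseq j * U (j + 1)) :
    (ρ * (heis H ((m : ℝ) * τ) O
        - ((List.range m).map (fun j => U (j + 1))).prodᴴ * O
            * ((List.range m).map (fun j => U (j + 1))).prod)).trace
      = ∑ j ∈ Finset.range m,
          (heis H ((((j : ℝ) + 1) - (m : ℝ)) * τ) ρ
            * (heis H τ (Oseq j) - Oseq (j + 1))).trace :=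
  stmt_9_general H O ρ U τ Oseq hO0 hOrec
end

section
/- Let τ ≥ 0. Assume H is Hermitian, Π is an orthogonal projection (Π² = Π = Πᴴ) with complement Π^⊥ := 1 − Π, H̃ := ΠHΠ, H₀ is a matrix such that H − H₀ commutes with Π, ρ is PSD, and O is a matrix with operator norm ‖O‖ ≤ 1 and OΠ = ΠO. Then | tr[ ( exp(iτH) − exp(iτH̃) )·O·( exp(−iτH) − exp(−iτH̃) )·ρ ] | ≤ 2·‖Π^⊥·√ρ‖_F² + 2·‖Π^⊥·exp(−iτH)·√ρ‖_F² + ( ∫₀^τ ‖Π·H₀·Π^⊥·exp(−i(τ−τ₁)H)·√ρ‖_F dτ₁ )². -/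
/-!
Put `U(t) = e^{-itH}`, `Ũ(t) = e^{-itH̃}`, `R = √ρ` and `S = (U(τ) - Ũ(τ)) R`, so that the trace
is `tr (Sᴴ O S)`. As `O` commutes with `Π` and is a contraction, this is at most
`‖Π^⊥ S‖_F² + ‖Π S‖_F²`. Since `Π^⊥ H̃ = 0` we have `Π^⊥ Ũ(τ) = Π^⊥`, so
`Π^⊥ S = Π^⊥ U(τ) R - Π^⊥ R`. Since `Ũ(τ)` commutes with `Π`, `Π S = (Π U(τ) - Ũ(τ) Π) R`, and
Duhamel's formula gives `Ũ(τ) Π - Π U(τ) = ∫₀^τ Ũ(s) · i (Π H - H̃ Π) · U(τ - s) ds`. Here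
`Π H - H̃ Π = Π H Π^⊥ = Π H₀ Π^⊥` because `H - H₀` commutes with `Π`, and `Ũ(s)` is unitary.
-/

open scoped Matrix ComplexOrder

/-- Frobenius norm `‖A‖_F = √(tr (Aᴴ A))`. -/
noncomputable def frobNorm {n : ℕ} (A : Matrix (Fin n) (Fin n) ℂ) : ℝ :=
  Real.sqrt ((Aᴴ * A).trace.re)

/-- The PSD square root of a PSD matrix, as `Matrix.PosSemidef.sqrt` was defined in the
older Mathlib (removed since). -/
noncomputable def Matrix.PosSemidef.sqrt {n : ℕ} {A : Matrix (Fin n) (Fin n) ℂ}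
    (hA : A.PosSemidef) : Matrix (Fin n) (Fin n) ℂ :=
  hA.1.eigenvectorUnitary.1 * Matrix.diagonal ((↑) ∘ (Real.sqrt ·) ∘ hA.1.eigenvalues) *
  (star hA.1.eigenvectorUnitary : Matrix (Fin n) (Fin n) ℂ)

open NormedSpace

section BanachAlgebra

variable {𝔸 : Type*} [NormedRing 𝔸] [NormedAlgebra ℝ 𝔸] [CompleteSpace 𝔸]

theorem exp_smul_mul_sub_mul_exp_smul_mul_eq_integral (A B X Y : 𝔸) (t : ℝ) :
    (exp (t • A) * X - X * exp (t • B)) * Y =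
      ∫ s in (0:ℝ)..t, exp (s • A) * (A * X - X * B) * exp ((t - s) • B) * Y := by
  have hderiv (s : ℝ) : HasDerivAt (fun u : ℝ => exp (u • A) * X * exp ((t - u) • B) * Y)
      (exp (s • A) * (A * X - X * B) * exp ((t - s) • B) * Y) s := by
    have hB := (hasDerivAt_exp_smul_const' B (t - s)).scomp s ((hasDerivAt_id s).const_sub t)
    refine ((((hasDerivAt_exp_smul_const A s).mul_const X).mul hB).mul_const Y).congr_deriv ?_
    simp only [Function.comp_apply, neg_smul, one_smul, mul_neg]
    noncomm_ring
  have hcont : Continuous fun s : ℝ => exp (s • A) * (A * X - X * B) * exp ((t - s) • B) * Y :=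
    (((differentiable_exp_smul_const ℝ A).continuous.mul continuous_const).mul
      ((differentiable_exp_smul_const ℝ B).continuous.comp (continuous_sub_left t))).mul
      continuous_const
  rw [intervalIntegral.integral_eq_sub_of_hasDerivAt (fun s _ => hderiv s)
    (hcont.intervalIntegrable _ _)]
  simp [sub_mul]

theorem mul_exp_eq_self_of_mul_eq_zero {A B : 𝔸} (h : B * A = 0) : B * exp A = B := by
  rw [exp_eq_tsum ℝ, ← (expSeries_summable' (𝕂 := ℝ) A).tsum_mul_left, tsum_eq_single 0]
  · simp
  · rintro (_ | k) hk
    · exact absurd rfl hk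
    · rw [mul_smul_comm, pow_succ', ← mul_assoc, h, zero_mul, smul_zero]

end BanachAlgebra

attribute [local instance] Matrix.frobeniusSeminormedAddCommGroup
  Matrix.frobeniusNormedAddCommGroup Matrix.frobeniusNormedSpace
  Matrix.frobeniusNormedRing Matrix.frobeniusNormedAlgebra

namespace Matrix

variable {m l : Type*} [Fintype m] [Fintype l]

theorem frobenius_norm_sq (A : Matrix m l ℂ) : ‖A‖ ^ 2 = ∑ i, ∑ j, ‖A i j‖ ^ 2 := by
  rw [frobenius_norm_def, ← Real.rpow_natCast, ← Real.rpow_mul (by positivity)]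
  norm_num

theorem frobenius_norm_sq_eq_re_trace (A : Matrix m l ℂ) : ‖A‖ ^ 2 = (Aᴴ * A).trace.re := by
  simp only [frobenius_norm_sq, trace, diag_apply, mul_apply, conjTranspose_apply,
    Complex.re_sum, RCLike.star_def, ← Complex.normSq_eq_norm_sq, Complex.normSq_apply,
    Complex.mul_re, Complex.conj_re, Complex.conj_im, neg_mul, sub_neg_eq_add]
  exact Finset.sum_comm

variable [DecidableEq m]

theorem frobenius_norm_unitary_mul {W : Matrix m m ℂ} (hW : W ∈ unitary _)
    (A : Matrix m l ℂ) : ‖W * A‖ = ‖A‖ := by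
  rw [← sq_eq_sq₀ (norm_nonneg _) (norm_nonneg _), frobenius_norm_sq_eq_re_trace,
    frobenius_norm_sq_eq_re_trace, conjTranspose_mul, Matrix.mul_assoc, ← Matrix.mul_assoc Wᴴ,
    ← star_eq_conjTranspose, Unitary.star_mul_self_of_mem hW, Matrix.one_mul]

theorem norm_trace_conjTranspose_mul_mul_self_le {O : Matrix m m ℂ}
    (hO : ∀ x, ‖toEuclideanLin O x‖ ≤ ‖x‖) (X : Matrix m l ℂ) :
    ‖(Xᴴ * O * X).trace‖ ≤ ‖X‖ ^ 2 := by
  let col (j : l) : EuclideanSpace ℂ m := WithLp.toLp 2 fun i => X i j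
  have hdiag (j : l) : (Xᴴ * O * X) j j = inner ℂ (col j) (toEuclideanLin O (col j)) := by
    simp only [col, toLpLin_apply, PiLp.inner_apply, RCLike.inner_apply, mulVec,
      dotProduct, mul_apply, conjTranspose_apply, RCLike.star_def, Finset.sum_mul]
    rw [Finset.sum_comm]
    exact Finset.sum_congr rfl fun _ _ => Finset.sum_congr rfl fun _ _ => by ring
  have hcol : ‖X‖ ^ 2 = ∑ j, ‖col j‖ ^ 2 := by
    simp only [col, EuclideanSpace.norm_sq_eq, frobenius_norm_sq]
    exact Finset.sum_comm
  calc ‖(Xᴴ * O * X).trace‖ ≤ ∑ j, ‖(Xᴴ * O * X) j j‖ := norm_sum_le _ _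
    _ ≤ ∑ j, ‖col j‖ ^ 2 := Finset.sum_le_sum fun j _ => by
      rw [hdiag, sq]
      exact (norm_inner_le_norm _ _).trans (mul_le_mul_of_nonneg_left (hO _) (norm_nonneg _))
    _ = ‖X‖ ^ 2 := hcol.symm

theorem norm_trace_conjTranspose_mul_mul_self_le_of_commute {P O : Matrix m m ℂ}
    (hP : P * P = P) (hPH : Pᴴ = P) (hOP : O * P = P * O)
    (hO : ∀ x, ‖toEuclideanLin O x‖ ≤ ‖x‖) (S : Matrix m l ℂ) :
    ‖(Sᴴ * O * S).trace‖ ≤ ‖(1 - P) * S‖ ^ 2 + ‖P * S‖ ^ 2 := by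
  have hPOP : P * O * P = P * O := by rw [Matrix.mul_assoc, hOP, ← Matrix.mul_assoc, hP]
  have hO_split : (1 - P) * O * (1 - P) + P * O * P = O := by
    simp only [Matrix.sub_mul, Matrix.mul_sub, Matrix.one_mul, Matrix.mul_one, hPOP, hOP]
    abel
  have hS_split :
      Sᴴ * O * S = ((1 - P) * S)ᴴ * O * ((1 - P) * S) + (P * S)ᴴ * O * (P * S) := by
    conv_lhs => rw [← hO_split]
    simp only [conjTranspose_mul, conjTranspose_sub, conjTranspose_one, hPH, Matrix.add_mul,
      Matrix.mul_add, Matrix.mul_assoc]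
  rw [hS_split, trace_add]
  exact (norm_add_le _ _).trans (add_le_add (norm_trace_conjTranspose_mul_mul_self_le hO _)
    (norm_trace_conjTranspose_mul_mul_self_le hO _))

theorem IsHermitian.exp_I_mul_smul {M : Matrix m m ℂ} (hM : M.IsHermitian) (t : ℝ) :
    NormedSpace.exp ((Complex.I * t) • M) = (NormedSpace.exp ((-(Complex.I * t)) • M))ᴴ := by
  rw [← exp_conjTranspose, conjTranspose_smul, hM.eq]
  simp [Complex.conj_ofReal]

end Matrix

theorem frobNorm_eq_norm {n : ℕ} (A : Matrix (Fin n) (Fin n) ℂ) : frobNorm A = ‖A‖ := by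
  rw [frobNorm, ← Matrix.frobenius_norm_sq_eq_re_trace, Real.sqrt_sq (norm_nonneg _)]

open scoped MatrixOrder in
theorem Matrix.PosSemidef.sqrt_eq_cfcSqrt {n : ℕ} {A : Matrix (Fin n) (Fin n) ℂ}
    (hA : A.PosSemidef) : hA.sqrt = CFC.sqrt A := by
  rw [CFC.sqrt_eq_cfc, cfc_nnreal_eq_real _ A, hA.1.cfc_eq, IsHermitian.cfc,
    Unitary.conjStarAlgAut_apply, Matrix.PosSemidef.sqrt]
  congr 3
  ext i
  simp [Real.coe_sqrt, hA.eigenvalues_nonneg i]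

open scoped MatrixOrder in
theorem Matrix.PosSemidef.trace_mul_eq_trace_mul_sqrt {n : ℕ} {ρ : Matrix (Fin n) (Fin n) ℂ}
    (hρ : ρ.PosSemidef) (D O : Matrix (Fin n) (Fin n) ℂ) :
    (Dᴴ * O * D * ρ).trace = ((D * hρ.sqrt)ᴴ * O * (D * hρ.sqrt)).trace := by
  have hR : (CFC.sqrt ρ)ᴴ = CFC.sqrt ρ := (CFC.sqrt_nonneg ρ).isSelfAdjoint
  conv_lhs => rw [← CFC.sqrt_mul_sqrt_self ρ hρ.nonneg, ← Matrix.mul_assoc, trace_mul_comm]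
  rw [hρ.sqrt_eq_cfcSqrt, conjTranspose_mul, hR]
  simp only [Matrix.mul_assoc]

section Evolution

open Complex (I)

variable {m : Type*} [Fintype m] [DecidableEq m]

theorem exp_neg_I_mul_smul_eq_exp_smul (t : ℝ) (M : Matrix m m ℂ) :
    exp ((-(I * t)) • M) = exp (t • (-I) • M) := by
  rw [← Complex.coe_smul, smul_smul, mul_neg, mul_comm]

omit [Fintype m] [DecidableEq m] in
theorem neg_I_smul_mem_skewAdjoint {M : Matrix m m ℂ} (hM : M.IsHermitian) :
    (-I) • M ∈ skewAdjoint (Matrix m m ℂ) :=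
  hM.isSelfAdjoint.smul_mem_skewAdjoint (by simp [skewAdjoint.mem_iff])

theorem norm_exp_smul_mul_sub_mul_exp_smul_mul_le {A : Matrix m m ℂ}
    (hA : A ∈ skewAdjoint (Matrix m m ℂ)) (B X Y : Matrix m m ℂ) {t : ℝ} (ht : 0 ≤ t) :
    ‖(exp (t • A) * X - X * exp (t • B)) * Y‖ ≤
      ∫ s in (0:ℝ)..t, ‖(A * X - X * B) * exp ((t - s) • B) * Y‖ := by
  -- `exp` on matrices uses the product topology, the general lemma the Frobenius one; they agree
  -- only up to unfolding, so the lemma is applied through `show`.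
  rw [show (exp (t • A) * X - X * exp (t • B)) * Y = _ from
    exp_smul_mul_sub_mul_exp_smul_mul_eq_integral A B X Y t]
  refine (intervalIntegral.norm_integral_le_integral_norm ht).trans_eq
    (intervalIntegral.integral_congr fun s _ => ?_)
  simp only [Matrix.mul_assoc]
  exact Matrix.frobenius_norm_unitary_mul
    (exp_mem_unitary_of_mem_skewAdjoint (skewAdjoint.smul_mem s hA)) _

theorem norm_sq_compl_mul_sub_exp_mul_le {P : Matrix m m ℂ} (hP : P * P = P)
    (c : ℂ) (M U R : Matrix m m ℂ) :
    ‖(1 - P) * ((U - exp (c • (P * M * P))) * R)‖ ^ 2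
      ≤ 2 * ‖(1 - P) * R‖ ^ 2 + 2 * ‖(1 - P) * U * R‖ ^ 2 := by
  have hQP : (1 - P) * P = 0 := by rw [Matrix.sub_mul, Matrix.one_mul, hP, sub_self]
  have hQ : (1 - P) * exp (c • (P * M * P)) = 1 - P := by
    refine mul_exp_eq_self_of_mul_eq_zero ?_
    rw [mul_smul_comm, ← Matrix.mul_assoc, ← Matrix.mul_assoc, hQP, Matrix.zero_mul,
      Matrix.zero_mul, smul_zero]
  rw [← Matrix.mul_assoc, Matrix.mul_sub, hQ, Matrix.sub_mul]
  calc ‖(1 - P) * U * R - (1 - P) * R‖ ^ 2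
      ≤ (‖(1 - P) * U * R‖ + ‖(1 - P) * R‖) ^ 2 :=
        pow_le_pow_left₀ (norm_nonneg _) (norm_sub_le _ _) 2
    _ ≤ 2 * (‖(1 - P) * U * R‖ ^ 2 + ‖(1 - P) * R‖ ^ 2) := add_sq_le
    _ = _ := by ring

theorem norm_proj_mul_exp_sub_exp_mul_le_integral {H H₀ P R : Matrix m m ℂ}
    (hH : H.IsHermitian) (hP : P * P = P) (hPH : Pᴴ = P)
    (hcomm : (H - H₀) * P = P * (H - H₀)) {τ : ℝ} (hτ : 0 ≤ τ) :
    ‖P * ((exp ((-(I * τ)) • H) - exp ((-(I * τ)) • (P * H * P))) * R)‖ ≤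
      ∫ s in (0:ℝ)..τ, ‖P * H₀ * (1 - P) * exp ((-(I * ((τ:ℂ) - (s:ℂ)))) • H) * R‖ := by
  have hHt : (P * H * P).IsHermitian := hH.isSelfAdjoint.conjugate_self hPH
  have hPHt : Commute P (τ • (-I) • (P * H * P)) := by
    refine (Commute.smul_right ?_ _).smul_right _
    simp only [Commute, SemiconjBy, ← Matrix.mul_assoc, hP]
    rw [Matrix.mul_assoc _ P P, hP]
  have hPHQ : P * H * (1 - P) = P * H₀ * (1 - P) := by
    rw [← sub_eq_zero, ← Matrix.sub_mul, ← Matrix.mul_sub, ← hcomm, Matrix.mul_assoc,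
      Matrix.mul_sub, Matrix.mul_one, hP, sub_self, Matrix.mul_zero]
  have hgen : (-I) • (P * H * P) * P - P * ((-I) • H) = I • (P * H₀ * (1 - P)) := by
    simp only [← hPHQ, smul_mul_assoc, mul_smul_comm, Matrix.mul_assoc, hP, Matrix.mul_sub,
      Matrix.mul_one]
    module
  calc ‖P * ((exp ((-(I * τ)) • H) - exp ((-(I * τ)) • (P * H * P))) * R)‖
      = ‖(exp (τ • (-I) • (P * H * P)) * P - P * exp (τ • (-I) • H)) * R‖ := by
        rw [exp_neg_I_mul_smul_eq_exp_smul, exp_neg_I_mul_smul_eq_exp_smul, ← Matrix.mul_assoc,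
          Matrix.mul_sub, ← hPHt.exp_right.eq, ← norm_neg, ← neg_mul, neg_sub]
    _ ≤ _ := norm_exp_smul_mul_sub_mul_exp_smul_mul_le (neg_I_smul_mem_skewAdjoint hHt) _ _ _ hτ
    _ = _ := intervalIntegral.integral_congr fun s _ => by
        rw [hgen, smul_mul_assoc, smul_mul_assoc, norm_smul, Complex.norm_I, one_mul,
          ← Complex.ofReal_sub, exp_neg_I_mul_smul_eq_exp_smul]

end Evolution

/-- Second-order error estimate for the effective-Hamiltonian comparison:
`|tr[(e^{iτH} − e^{iτH̃})·O·(e^{−iτH} − e^{−iτH̃})·ρ]|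
  ≤ 2‖Π^⊥√ρ‖_F² + 2‖Π^⊥e^{−iτH}√ρ‖_F²
    + (∫₀^τ ‖Π·H₀·Π^⊥·e^{−i(τ−τ₁)H}·√ρ‖_F dτ₁)²`,
where `H̃ = ΠHΠ` and `Π^⊥ = 1 − Π`, for `O` of operator norm at most 1
commuting with `Π`. -/
theorem stmt_11 {n : ℕ} (τ : ℝ) (hτ : 0 ≤ τ)
    (H P H₀ ρ O : Matrix (Fin n) (Fin n) ℂ)
    (hH : H.IsHermitian)
    (hP2 : P * P = P) (hPH : Pᴴ = P)
    (hcomm : (H - H₀) * P = P * (H - H₀))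
    (hρ : ρ.PosSemidef)
    (hOnorm : ∀ x : EuclideanSpace ℂ (Fin n),
      ‖Matrix.toEuclideanLin O x‖ ≤ ‖x‖)
    (hOP : O * P = P * O) :
    ‖(((NormedSpace.exp ((Complex.I * (τ : ℂ)) • H)
              - NormedSpace.exp ((Complex.I * (τ : ℂ)) • (P * H * P))) * O *
            (NormedSpace.exp ((-(Complex.I * (τ : ℂ))) • H)
              - NormedSpace.exp ((-(Complex.I * (τ : ℂ))) • (P * H * P))) *
            ρ).trace)‖
      ≤ 2 * frobNorm (((1 : Matrix (Fin n) (Fin n) ℂ) - P) * hρ.sqrt) ^ 2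
        + 2 * frobNorm (((1 : Matrix (Fin n) (Fin n) ℂ) - P)
            * NormedSpace.exp ((-(Complex.I * (τ : ℂ))) • H) * hρ.sqrt) ^ 2
        + (∫ τ₁ in (0:ℝ)..τ,
            frobNorm (P * H₀ * ((1 : Matrix (Fin n) (Fin n) ℂ) - P)
              * NormedSpace.exp
                  ((-(Complex.I * ((τ : ℂ) - (τ₁ : ℂ)))) • H)
              * hρ.sqrt)) ^ 2 := by
  have hHt : (P * H * P).IsHermitian := hH.isSelfAdjoint.conjugate_self hPH
  rw [hH.exp_I_mul_smul, hHt.exp_I_mul_smul, ← Matrix.conjTranspose_sub,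
    hρ.trace_mul_eq_trace_mul_sqrt]
  simp only [frobNorm_eq_norm]
  refine (Matrix.norm_trace_conjTranspose_mul_mul_self_le_of_commute hP2 hPH hOP hOnorm _).trans
    (add_le_add (norm_sq_compl_mul_sub_exp_mul_le hP2 _ _ _ _) ?_)
  exact pow_le_pow_left₀ (norm_nonneg _)
    (norm_proj_mul_exp_sub_exp_mul_le_integral hH hP2 hPH hcomm hτ) 2
end

section
/- Let U > 0 be real and J ∈ ℝ. Then the set { 2U·b² − 2·|J|·a·b : a, b ∈ ℝ, a ≥ 0, b ≥ 0, a² + 2b² = 1 } has a least element, equal to (U/2)·( 1 − √( 1 + 2J²/U² ) ). -/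
/-!
Writing `x = a² - 2b²` and `y = 2ab`, the constraint `a² + 2b² = 1` becomes `x² + 2y² = 1`
(a half-angle substitution), and the energy becomes `U/2 - (U/2 · x + |J| · y)`. A weighted
Cauchy–Schwarz inequality bounds `U/2 · x + |J| · y` by `√(U²/4 + J²/2)`, with equality on the
ray through `(U/2, |J|/2)`, which the substitution reaches because `|J| ≥ 0`.
-/

lemma sq_sub_two_mul_sq_add_two_mul_sq (a b : ℝ) :
    (a ^ 2 - 2 * b ^ 2) ^ 2 + 2 * (2 * a * b) ^ 2 = (a ^ 2 + 2 * b ^ 2) ^ 2 := by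
  ring

lemma exists_sq_sub_two_mul_sq_eq {x y : ℝ} (hy : 0 ≤ y) (h : x ^ 2 + 2 * y ^ 2 = 1) :
    ∃ a b : ℝ, 0 ≤ a ∧ 0 ≤ b ∧ a ^ 2 + 2 * b ^ 2 = 1 ∧ a ^ 2 - 2 * b ^ 2 = x ∧ 2 * a * b = y := by
  have hx : x ^ 2 ≤ 1 := by nlinarith
  have ha : √((1 + x) / 2) ^ 2 = (1 + x) / 2 := Real.sq_sqrt (by nlinarith)
  have hb : √((1 - x) / 4) ^ 2 = (1 - x) / 4 := Real.sq_sqrt (by nlinarith)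
  refine ⟨√((1 + x) / 2), √((1 - x) / 4), Real.sqrt_nonneg _, Real.sqrt_nonneg _,
    by rw [ha, hb]; ring, by rw [ha, hb]; ring, ?_⟩
  have hprod : (2 * √((1 + x) / 2) * √((1 - x) / 4)) ^ 2 = y ^ 2 := by
    rw [mul_pow, mul_pow, ha, hb]; linarith
  exact (pow_left_inj₀ (by positivity) hy two_ne_zero).mp hprod

lemma sq_mul_add_mul_le (p q x y : ℝ) :
    (p * x + q * y) ^ 2 ≤ (p ^ 2 + q ^ 2 / 2) * (x ^ 2 + 2 * y ^ 2) := by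
  nlinarith [sq_nonneg (q * x - 2 * p * y)]

lemma mul_add_mul_le_sqrt {x y : ℝ} (p q : ℝ) (h : x ^ 2 + 2 * y ^ 2 = 1) :
    p * x + q * y ≤ √(p ^ 2 + q ^ 2 / 2) :=
  (le_abs_self _).trans <| Real.abs_le_sqrt <| by simpa [h] using sq_mul_add_mul_le p q x y

lemma exists_mul_add_mul_eq_sqrt {p q : ℝ} (hq : 0 ≤ q) (hpq : 0 < p ^ 2 + q ^ 2 / 2) :
    ∃ x y : ℝ, 0 ≤ y ∧ x ^ 2 + 2 * y ^ 2 = 1 ∧ p * x + q * y = √(p ^ 2 + q ^ 2 / 2) := by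
  set R := √(p ^ 2 + q ^ 2 / 2)
  have hR : 0 < R := Real.sqrt_pos.mpr hpq
  have hR2 : R ^ 2 = p ^ 2 + q ^ 2 / 2 := Real.sq_sqrt hpq.le
  refine ⟨p / R, q / (2 * R), by positivity, ?_, ?_⟩
  · field_simp
    linarith
  · field_simp
    linarith

/-- Two-mode variational minimization: for `U > 0` and `J ∈ ℝ`, the set
`{2U·b² − 2|J|·a·b : a,b ≥ 0, a² + 2b² = 1}` has least element
`(U/2)·(1 − √(1 + 2J²/U²))`. -/
theorem stmt_13 (U J : ℝ) (hU : 0 < U) :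
    IsLeast
      {x : ℝ | ∃ a b : ℝ, 0 ≤ a ∧ 0 ≤ b ∧ a ^ 2 + 2 * b ^ 2 = 1 ∧
        x = 2 * U * b ^ 2 - 2 * |J| * a * b}
      ((U / 2) * (1 - Real.sqrt (1 + 2 * J ^ 2 / U ^ 2))) := by
  have hmin : (U / 2) * (1 - √(1 + 2 * J ^ 2 / U ^ 2)) = U / 2 - √((U / 2) ^ 2 + |J| ^ 2 / 2) := by
    rw [mul_one_sub, ← Real.sqrt_sq (by positivity : 0 ≤ U / 2), ← Real.sqrt_mul (by positivity),
      Real.sqrt_sq (by positivity), sq_abs]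
    congr 2
    field_simp
  have henergy : ∀ a b : ℝ, a ^ 2 + 2 * b ^ 2 = 1 →
      2 * U * b ^ 2 - 2 * |J| * a * b = U / 2 - (U / 2 * (a ^ 2 - 2 * b ^ 2) + |J| * (2 * a * b)) :=
    fun a b hab => by linear_combination (U / 2) * hab
  rw [hmin]
  constructor
  · obtain ⟨x, y, hy, hxy, hopt⟩ := exists_mul_add_mul_eq_sqrt (abs_nonneg J)
      (by positivity : 0 < (U / 2) ^ 2 + |J| ^ 2 / 2)
    obtain ⟨a, b, ha, hb, hab, rfl, rfl⟩ := exists_sq_sub_two_mul_sq_eq hy hxy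
    exact ⟨a, b, ha, hb, hab, by rw [henergy a b hab, hopt]⟩
  · rintro _ ⟨a, b, -, -, hab, rfl⟩
    have hunit : (a ^ 2 - 2 * b ^ 2) ^ 2 + 2 * (2 * a * b) ^ 2 = 1 := by
      rw [sq_sub_two_mul_sq_add_two_mul_sq, hab, one_pow]
    rw [henergy a b hab]
    linarith [mul_add_mul_le_sqrt (U / 2) |J| hunit]
end
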